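/- Let n ∈ ℝ^N be a unit vector, u ∈ ℝ^N with u·n = 0, and 0 < ε ≤ 1. Let g : ℝ^N → ℝ be measurable with 1 + ε g ≥ 0 a.e., and assume that g, h(εg), and e^{2|u||v|}(1+εg) are integrable against (v·n)₊ M(v) dv. Then ∫_{ℝ^N} (u·v)(v·n)₊ g(v) M(v) dv ≤ (1/(2ε²)) · (1/√(2π)) ( Λ_n(h(εg)) − h(ε Λ_n(g)) ) + C(u) · Λ_n(1 + εg), where C(u) := ½ ∫_{ℝ^N} ( e^{2|u||v|} − 2|u||v| − 1 ) (v·n)₊ M(v) dv. -/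

import Mathlib

open MeasureTheory Real Set
open scoped RealInnerProductSpace

/-- The standard Gaussian density `M(v) = (2π)^{−N/2} exp(−|v|²/2)` on `ℝ^N`. -/
noncomputable def gaussM {N : ℕ} (v : EuclideanSpace ℝ (Fin N)) : ℝ :=
  (2 * π) ^ (-(N : ℝ) / 2) * Real.exp (-‖v‖ ^ 2 / 2)

/-- The relative-entropy integrand `h(z) = (1+z)·log(1+z) − z`
(with the convention `h(−1) = 1`, which holds here since `Real.log 0 = 0`). -/
noncomputable def entH (z : ℝ) : ℝ := (1 + z) * Real.log (1 + z) - z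

/-- The boundary average `Λ_n(φ) = √(2π) ∫ φ(v)(v·n)₊ M(v) dv`. -/
noncomputable def Lam {N : ℕ} (n : EuclideanSpace ℝ (Fin N))
    (φ : EuclideanSpace ℝ (Fin N) → ℝ) : ℝ :=
  Real.sqrt (2 * π) * ∫ v, φ v * max ⟪v, n⟫ 0 * gaussM v

/-!
`Λ_n` is integration against the probability measure `√(2π) (v·n)₊ M(v) dv`. With `F = 1 + εg`,
`t = Λ_n(F)` and `c = 2ε u·v`, Young's inequality `a c ≤ a log a - a log t - a + t eᶜ` for the
conjugate pair `x log x - x` and `exp`, integrated against this measure, gives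
`Λ_n(F c) ≤ Λ_n(h(εg)) - h(εΛ_n(g)) + t (Λ_n(eᶜ) - 1)`.
Since `u·n = 0`, the reflection in `u^⊥` preserves the measure and reverses `u·v`, so
`Λ_n(u·v) = 0`. Hence `Λ_n(F c) = 2ε² Λ_n((u·v) g)` and `Λ_n(eᶜ) - 1 = Λ_n(ψ(c))` with
`ψ(z) = eᶻ - z - 1`, and `ψ(2ε u·v) ≤ ψ(2ε|u||v|) ≤ ε² ψ(2|u||v|)` for `0 < ε ≤ 1`.
-/

open ProbabilityTheory
open scoped NNReal ENNReal

namespace Real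

theorem young_inequality_exp {a t : ℝ} (ha : 0 ≤ a) (ht : 0 < t) (c : ℝ) :
    a * c ≤ a * log a - a * log t - a + t * exp c := by
  rcases ha.eq_or_lt with rfl | ha
  · simpa using (mul_pos ht (exp_pos c)).le
  have key := add_one_le_exp (c + log t - log a)
  rw [exp_sub, exp_add, exp_log ht, exp_log ha] at key
  have := mul_le_mul_of_nonneg_left key ha.le
  rw [mul_div_cancel₀ _ ha.ne'] at this
  linarith

theorem exp_sub_sub_one_le_of_abs_le {x y : ℝ} (h : |x| ≤ y) :
    exp x - x - 1 ≤ exp y - y - 1 := by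
  have mono : ∀ a b : ℝ, 0 ≤ a → a ≤ b → exp a - a ≤ exp b - b := fun a b ha hab => by
    have := add_one_le_exp (b - a)
    rw [exp_sub] at this
    have := mul_le_mul_of_nonneg_left this (exp_pos a).le
    rw [mul_div_cancel₀ _ (exp_pos a).ne'] at this
    nlinarith [one_le_exp ha]
  rcases le_or_gt 0 x with hx | hx
  · linarith [mono x y hx (le_abs_self x |>.trans h)]
  · have hsinh : -x ≤ sinh (-x) := self_le_sinh_iff.mpr (by linarith)
    rw [sinh_eq, neg_neg] at hsinh
    linarith [mono (-x) y (by linarith) (neg_le_abs x |>.trans h)]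

theorem exp_mul_sub_sub_one_le {ε x : ℝ} (hε0 : 0 ≤ ε) (hε1 : ε ≤ 1) (hx : 0 ≤ x) :
    exp (ε * x) - ε * x - 1 ≤ ε ^ 2 * (exp x - x - 1) := by
  set F : ℝ → ℝ := fun x => ε ^ 2 * (exp x - x - 1) - (exp (ε * x) - ε * x - 1)
  have hF : ∀ x, HasDerivAt F (ε ^ 2 * (exp x - 1) - ε * (exp (ε * x) - 1)) x := fun x => by
    have h := (((hasDerivAt_exp x).sub (hasDerivAt_id x)).sub_const 1).const_mul (ε ^ 2) |>.sub
      ((((hasDerivAt_id x).const_mul ε).exp.sub ((hasDerivAt_id x).const_mul ε)).sub_const 1)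
    exact h.congr_deriv (by simp only [id, mul_one]; ring)
  have hmono : MonotoneOn F (Ici 0) := by
    refine monotoneOn_of_hasDerivWithinAt_nonneg (convex_Ici 0)
      (fun x _ => (hF x).continuousAt.continuousWithinAt)
      (fun x _ => (hF x).hasDerivWithinAt) fun y _ => ?_
    have hconv : exp (ε * y) ≤ 1 - ε + ε * exp y := by
      simpa using convexOn_exp.2 (mem_univ 0) (mem_univ y) (by linarith : 0 ≤ 1 - ε) hε0
        (by ring)
    nlinarith [mul_nonneg hε0 (sub_nonneg.mpr hconv)]
  have := hmono self_mem_Ici hx hx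
  simp only [F, mul_zero, exp_zero] at this
  linarith

end Real

theorem entH_neg_one : entH (-1) = 1 := by simp [entH]

theorem integral_one_add_mul_le_entH {α : Type*} [MeasurableSpace α] {μ : Measure α}
    [IsProbabilityMeasure μ] {f c : α → ℝ} (hf : ∀ᵐ x ∂μ, 0 ≤ 1 + f x)
    (hfi : Integrable f μ) (hhf : Integrable (fun x => entH (f x)) μ)
    (hfc : Integrable (fun x => (1 + f x) * c x) μ) (hc : Integrable (fun x => exp (c x)) μ) :
    ∫ x, (1 + f x) * c x ∂μ ≤
      ∫ x, entH (f x) ∂μ - entH (∫ x, f x ∂μ) + (1 + ∫ x, f x ∂μ) * (∫ x, exp (c x) ∂μ - 1) := by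
  set t := 1 + ∫ x, f x ∂μ
  have hF : Integrable (fun x => 1 + f x) μ := (integrable_const 1).add hfi
  have ht : ∫ x, (1 + f x) ∂μ = t := by
    rw [integral_add (integrable_const 1) hfi]; simp [t]
  have hpoint : ∀ᵐ x ∂μ, (1 + f x) * c x ≤
      entH (f x) - (log t + 1) * (1 + f x) + f x + t * exp (c x) := by
    rcases (ht ▸ integral_nonneg_of_ae hf : 0 ≤ t).eq_or_lt with ht0 | htpos
    · -- `t = 0` forces `1 + f = 0` almost everywhere, where both sides vanish
      have hzero := (integral_eq_zero_iff_of_nonneg_ae hf hF).1 (ht.trans ht0.symm)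
      filter_upwards [hzero] with x hx
      have hfx : f x = -1 := by simp only [Pi.zero_apply] at hx; linarith
      rw [hfx, entH_neg_one, ← ht0]; simp
    · filter_upwards [hf] with x hx
      have := Real.young_inequality_exp hx htpos (c x)
      simp only [entH]
      linarith
  have i₁ : Integrable (fun x => entH (f x) - (log t + 1) * (1 + f x)) μ :=
    hhf.sub (hF.const_mul _)
  have i₂ : Integrable (fun x => entH (f x) - (log t + 1) * (1 + f x) + f x) μ := i₁.add hfi
  have hsum : ∫ x, (entH (f x) - (log t + 1) * (1 + f x) + f x + t * exp (c x)) ∂μ =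
      ∫ x, entH (f x) ∂μ - (log t + 1) * t + ∫ x, f x ∂μ + t * ∫ x, exp (c x) ∂μ := by
    rw [integral_add i₂ (hc.const_mul t), integral_add i₁ hfi,
      integral_sub hhf (hF.const_mul _), integral_const_mul, integral_const_mul, ht]
  have hint := (integral_mono_ae hfc (i₂.add (hc.const_mul t)) hpoint).trans_eq hsum
  have hentH : entH (∫ x, f x ∂μ) = t * log t - ∫ x, f x ∂μ := rfl
  rw [hentH]
  linarith

section Tangential

variable {E : Type*} [NormedAddCommGroup E] [InnerProductSpace ℝ E]

theorem abs_two_mul_inner_le {ε : ℝ} (hε0 : 0 ≤ ε) (u v : E) :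
    |2 * ε * ⟪u, v⟫| ≤ ε * (2 * ‖u‖ * ‖v‖) := by
  rw [abs_mul, abs_of_nonneg (by positivity)]
  nlinarith [abs_real_inner_le_norm u v]

variable [MeasurableSpace E] [OpensMeasurableSpace E] {μ : Measure E} {u : E}

theorem integrable_inner_of_integrable_exp (hmom : Integrable (fun v => exp (2 * ‖u‖ * ‖v‖)) μ) :
    Integrable (fun v => ⟪u, v⟫) μ :=
  hmom.mono' (by fun_prop) (Filter.Eventually.of_forall fun v => by
    rw [norm_eq_abs]
    nlinarith [abs_real_inner_le_norm u v, add_one_le_exp (2 * ‖u‖ * ‖v‖),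
      mul_nonneg (norm_nonneg u) (norm_nonneg v)])

theorem integrable_exp_two_mul_inner (hmom : Integrable (fun v => exp (2 * ‖u‖ * ‖v‖)) μ)
    {ε : ℝ} (hε0 : 0 ≤ ε) (hε1 : ε ≤ 1) : Integrable (fun v => exp (2 * ε * ⟪u, v⟫)) μ :=
  hmom.mono' (by fun_prop) (Filter.Eventually.of_forall fun v => by
    rw [norm_of_nonneg (exp_pos _).le]
    refine exp_le_exp.2 ((le_abs_self _).trans ((abs_two_mul_inner_le hε0 u v).trans ?_))
    nlinarith [mul_nonneg (norm_nonneg u) (norm_nonneg v)])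

theorem integral_exp_two_mul_inner_sub_one_le [IsProbabilityMeasure μ] (hu : ∫ v, ⟪u, v⟫ ∂μ = 0)
    (hmom : Integrable (fun v => exp (2 * ‖u‖ * ‖v‖)) μ) {ε : ℝ} (hε0 : 0 ≤ ε) (hε1 : ε ≤ 1) :
    ∫ v, exp (2 * ε * ⟪u, v⟫) ∂μ - 1 ≤
      ε ^ 2 * ∫ v, (exp (2 * ‖u‖ * ‖v‖) - 2 * ‖u‖ * ‖v‖ - 1) ∂μ := by
  have hexp := integrable_exp_two_mul_inner hmom hε0 hε1
  have hlin : Integrable (fun v => 2 * ε * ⟪u, v⟫) μ :=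
    (integrable_inner_of_integrable_exp hmom).const_mul _
  have hnorm : Integrable (fun v => 2 * ‖u‖ * ‖v‖) μ :=
    hmom.mono' (by fun_prop) (Filter.Eventually.of_forall fun v => by
      rw [norm_of_nonneg (by positivity)]
      linarith [add_one_le_exp (2 * ‖u‖ * ‖v‖)])
  calc ∫ v, exp (2 * ε * ⟪u, v⟫) ∂μ - 1
      = ∫ v, (exp (2 * ε * ⟪u, v⟫) - 2 * ε * ⟪u, v⟫ - 1) ∂μ := by
        rw [integral_sub ?_ (integrable_const 1), integral_sub hexp hlin, integral_const_mul, hu]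
        · simp
        · exact hexp.sub hlin
    _ ≤ ∫ v, ε ^ 2 * (exp (2 * ‖u‖ * ‖v‖) - 2 * ‖u‖ * ‖v‖ - 1) ∂μ :=
        integral_mono ((hexp.sub hlin).sub (integrable_const 1))
          (((hmom.sub hnorm).sub (integrable_const 1)).const_mul _) fun v =>
          (exp_sub_sub_one_le_of_abs_le (abs_two_mul_inner_le hε0 u v)).trans
            (exp_mul_sub_sub_one_le hε0 hε1 (by positivity))
    _ = _ := integral_const_mul _ _

theorem integral_inner_mul_le_entH [IsProbabilityMeasure μ] (hu : ∫ v, ⟪u, v⟫ ∂μ = 0)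
    (hmom : Integrable (fun v => exp (2 * ‖u‖ * ‖v‖)) μ) {ε : ℝ} (hε : 0 < ε) (hε1 : ε ≤ 1)
    {g : E → ℝ} (hpos : ∀ᵐ v ∂μ, 0 ≤ 1 + ε * g v) (hg : Integrable g μ)
    (hhg : Integrable (fun v => entH (ε * g v)) μ)
    (hexp : Integrable (fun v => exp (2 * ‖u‖ * ‖v‖) * (1 + ε * g v)) μ) :
    ∫ v, ⟪u, v⟫ * g v ∂μ ≤
      1 / (2 * ε ^ 2) * (∫ v, entH (ε * g v) ∂μ - entH (ε * ∫ v, g v ∂μ)) +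
        (1 / 2 * ∫ v, (exp (2 * ‖u‖ * ‖v‖) - 2 * ‖u‖ * ‖v‖ - 1) ∂μ) * (1 + ε * ∫ v, g v ∂μ) := by
  have hinner := integrable_inner_of_integrable_exp hmom
  have hF : Integrable (fun v => 1 + ε * g v) μ := (integrable_const 1).add (hg.const_mul ε)
  have hFc : Integrable (fun v => (1 + ε * g v) * (2 * ε * ⟪u, v⟫)) μ := by
    refine hexp.mono' (hF.aestronglyMeasurable.mul (by fun_prop)) ?_
    filter_upwards [hpos] with v hv
    rw [norm_mul, norm_of_nonneg hv, mul_comm (exp _), norm_eq_abs]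
    gcongr
    rw [abs_mul, abs_of_pos (by positivity)]
    nlinarith [abs_real_inner_le_norm u v, add_one_le_exp (2 * ‖u‖ * ‖v‖),
      mul_nonneg (norm_nonneg u) (norm_nonneg v)]
  have hug : Integrable (fun v => ⟪u, v⟫ * g v) μ :=
    ((hFc.sub (hinner.const_mul (2 * ε))).const_mul (2 * ε ^ 2)⁻¹).congr
      (Filter.Eventually.of_forall fun v => by simp only [Pi.sub_apply]; field_simp; ring)
  have hLHS : ∫ v, (1 + ε * g v) * (2 * ε * ⟪u, v⟫) ∂μ = 2 * ε ^ 2 * ∫ v, ⟪u, v⟫ * g v ∂μ := by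
    calc ∫ v, (1 + ε * g v) * (2 * ε * ⟪u, v⟫) ∂μ
        = ∫ v, (2 * ε ^ 2 * (⟪u, v⟫ * g v) + 2 * ε * ⟪u, v⟫) ∂μ := by congr 1 with v; ring
      _ = 2 * ε ^ 2 * ∫ v, ⟪u, v⟫ * g v ∂μ := by
        rw [integral_add (hug.const_mul _) (hinner.const_mul _), integral_const_mul,
          integral_const_mul, hu, mul_zero, add_zero]
  have hmass : 0 ≤ 1 + ε * ∫ v, g v ∂μ := by
    simpa [integral_add (integrable_const 1) (hg.const_mul ε), integral_const_mul] using
      integral_nonneg_of_ae hpos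
  have hent := integral_one_add_mul_le_entH hpos (hg.const_mul ε) hhg hFc
    (integrable_exp_two_mul_inner hmom hε.le hε1)
  rw [integral_const_mul, hLHS] at hent
  have hψ := mul_le_mul_of_nonneg_left (integral_exp_two_mul_inner_sub_one_le hu hmom hε.le hε1) hmass
  have hε2 : 0 < 2 * ε ^ 2 := by positivity
  rw [← mul_le_mul_iff_of_pos_left hε2]
  calc 2 * ε ^ 2 * ∫ v, ⟪u, v⟫ * g v ∂μ
      ≤ ∫ v, entH (ε * g v) ∂μ - entH (ε * ∫ v, g v ∂μ) + (1 + ε * ∫ v, g v ∂μ) *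
          (ε ^ 2 * ∫ v, (exp (2 * ‖u‖ * ‖v‖) - 2 * ‖u‖ * ‖v‖ - 1) ∂μ) := hent.trans (by linarith)
    _ = _ := by field_simp

end Tangential

section Gaussian

variable {N : ℕ}

theorem gaussM_pos (v : EuclideanSpace ℝ (Fin N)) : 0 < gaussM v := by
  unfold gaussM; positivity

@[fun_prop]
theorem continuous_gaussM : Continuous (gaussM (N := N)) := by
  unfold gaussM; fun_prop

theorem gaussM_map_linearIsometryEquiv
    (L : EuclideanSpace ℝ (Fin N) ≃ₗᵢ[ℝ] EuclideanSpace ℝ (Fin N)) (v : EuclideanSpace ℝ (Fin N)) : gaussM (L v) = gaussM v := by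
  simp only [gaussM, L.norm_map]

theorem gaussM_eq_prod (v : EuclideanSpace ℝ (Fin N)) :
    gaussM v = ∏ i, gaussianPDFReal 0 1 (v i) := by
  have hsq : ‖v‖ ^ 2 = ∑ i, v i ^ 2 := by simp [EuclideanSpace.norm_sq_eq]
  have hpow : (2 * π) ^ (-(N : ℝ) / 2) = (√(2 * π))⁻¹ ^ N := by
    rw [sqrt_eq_rpow, ← rpow_neg_one, ← rpow_natCast, ← rpow_mul (by positivity),
      ← rpow_mul (by positivity)]
    ring_nf
  simp only [gaussM, gaussianPDFReal, Finset.prod_mul_distrib, Finset.prod_const,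
    Finset.card_univ, Fintype.card_fin, ← exp_sum, hsq, hpow]
  simp [Finset.sum_div, neg_div]

theorem integral_comp_apply_mul_gaussM (f : ℝ → ℝ) (i : Fin N) :
    ∫ v, f (v i) * gaussM v = ∫ t, f t * gaussianPDFReal 0 1 t := by
  classical
  set F : Fin N → ℝ → ℝ := fun j =>
    if j = i then fun t => f t * gaussianPDFReal 0 1 t else gaussianPDFReal 0 1
  have hprod (v : EuclideanSpace ℝ (Fin N)) : f (v i) * gaussM v = ∏ j, F j (v j) := by
    rw [gaussM_eq_prod, ← Finset.mul_prod_erase _ _ (Finset.mem_univ i),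
      ← Finset.mul_prod_erase _ _ (Finset.mem_univ i)]
    simp only [F, if_pos rfl, mul_assoc]
    congr 2
    exact Finset.prod_congr rfl fun j hj => by rw [if_neg (Finset.ne_of_mem_erase hj)]
  simp_rw [hprod]
  rw [← (EuclideanSpace.volume_preserving_symm_measurableEquiv_toLp (Fin N)).symm.integral_comp']
  simp only [MeasurableEquiv.symm_symm, MeasurableEquiv.toLp_apply]
  rw [integral_fintype_prod_volume_eq_prod, Finset.prod_eq_single i
    (fun j _ hj => by simp only [F, if_neg hj, integral_gaussianPDFReal_eq_one 0 one_ne_zero])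
    (by simp)]
  simp [F]

theorem integral_comp_linearIsometryEquiv_mul_gaussM
    (L : EuclideanSpace ℝ (Fin N) ≃ₗᵢ[ℝ] EuclideanSpace ℝ (Fin N))
    (G : EuclideanSpace ℝ (Fin N) → ℝ) :
    ∫ v, G (L v) * gaussM v = ∫ v, G v * gaussM v := by
  calc ∫ v, G (L v) * gaussM v = ∫ v, G (L v) * gaussM (L v) := by
        simp_rw [gaussM_map_linearIsometryEquiv]
    _ = ∫ v, G v * gaussM v :=
        L.measurePreserving.integral_comp L.toHomeomorph.measurableEmbedding
          fun v => G v * gaussM v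

theorem integral_comp_inner_mul_gaussM {n : EuclideanSpace ℝ (Fin N)} (hn : ‖n‖ = 1)
    (f : ℝ → ℝ) : ∫ v, f ⟪v, n⟫ * gaussM v = ∫ t, f t * gaussianPDFReal 0 1 t := by
  have hN : 0 < N := by
    rcases Nat.eq_zero_or_pos N with rfl | h
    · simp [Subsingleton.elim n 0] at hn
    · exact h
  set e := EuclideanSpace.single (⟨0, hN⟩ : Fin N) (1 : ℝ)
  set R := (ℝ ∙ (e - n))ᗮ.reflection
  have hRe : R e = n := Submodule.reflection_sub (by simp [e, hn])
  have hinner (v : EuclideanSpace ℝ (Fin N)) : ⟪R v, n⟫ = v ⟨0, hN⟩ := by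
    rw [← hRe, LinearIsometryEquiv.inner_map_map, EuclideanSpace.inner_single_right]
    simp
  rw [← integral_comp_linearIsometryEquiv_mul_gaussM R]
  simp_rw [hinner]
  exact integral_comp_apply_mul_gaussM f _

theorem integral_posPart_mul_gaussianPDFReal :
    ∫ t, max t 0 * gaussianPDFReal 0 1 t = (√(2 * π))⁻¹ := by
  have hgamma : ∫ t in Ioi 0, t * exp (-(1 / 2 * t ^ 2)) = 1 := by
    have h := integral_rpow_mul_exp_neg_mul_rpow (p := 2) (q := 1) (b := 1 / 2)
      (by norm_num) (by norm_num) (by norm_num)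
    norm_num at h
    exact h
  rw [← setIntegral_eq_integral_of_forall_compl_eq_zero fun t (ht : t ∉ Ioi 0) => by
    rw [max_eq_right (not_lt.mp ht), zero_mul]]
  rw [setIntegral_congr_fun measurableSet_Ioi
    (g := fun t => (√(2 * π))⁻¹ * (t * exp (-(1 / 2 * t ^ 2))))
    fun t (ht : 0 < t) => by simp [gaussianPDFReal, max_eq_left ht.le]; ring_nf,
    integral_const_mul, hgamma, mul_one]

theorem Lam_one {n : EuclideanSpace ℝ (Fin N)} (hn : ‖n‖ = 1) : Lam n (fun _ => 1) = 1 := by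
  simp only [Lam, one_mul]
  rw [integral_comp_inner_mul_gaussM hn fun t => max t 0, integral_posPart_mul_gaussianPDFReal,
    mul_inv_cancel₀ (by positivity)]

theorem Lam_inner_eq_zero {n u : EuclideanSpace ℝ (Fin N)} (hu : ⟪u, n⟫ = 0) :
    Lam n (fun v => ⟪u, v⟫) = 0 := by
  set R := (ℝ ∙ u)ᗮ.reflection
  have hRn : R n = n := Submodule.reflection_mem_subspace_eq_self
    (Submodule.mem_orthogonal_singleton_iff_inner_right.2 hu)
  have hRu (v : EuclideanSpace ℝ (Fin N)) : ⟪u, R v⟫ = -⟪u, v⟫ := by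
    rw [← R.inner_map_map, Submodule.reflection_reflection,
      Submodule.reflection_orthogonalComplement_singleton_eq_neg, inner_neg_left]
  have hRn' (v : EuclideanSpace ℝ (Fin N)) : ⟪R v, n⟫ = ⟪v, n⟫ := by
    rw [← hRn, R.inner_map_map, hRn]
  have hsymm := integral_comp_linearIsometryEquiv_mul_gaussM R fun v => ⟪u, v⟫ * max ⟪v, n⟫ 0
  simp only [hRu, hRn', neg_mul, integral_neg] at hsymm
  simp only [Lam, mul_eq_zero]
  right
  linarith

theorem integrable_exp_mul_norm_mul_gaussM (a : ℝ) :
    Integrable fun v : EuclideanSpace ℝ (Fin N) => exp (a * ‖v‖) * gaussM v := by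
  have hgauss : Integrable fun v : EuclideanSpace ℝ (Fin N) => exp (-(1 / 4) * ‖v‖ ^ 2) := by
    simpa [Complex.norm_exp, ← Complex.ofReal_pow] using
      (GaussianFourier.integrable_cexp_neg_mul_sq_norm_add (V := EuclideanSpace ℝ (Fin N))
        (b := 1 / 4) (by norm_num) 0 0).norm
  refine (hgauss.const_mul ((2 * π) ^ (-(N : ℝ) / 2) * exp (a ^ 2))).mono'
    (by fun_prop) (Filter.Eventually.of_forall fun v => ?_)
  have hexp : a * ‖v‖ + -‖v‖ ^ 2 / 2 ≤ a ^ 2 + -(1 / 4) * ‖v‖ ^ 2 := by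
    nlinarith [sq_nonneg (‖v‖ / 2 - a)]
  rw [norm_of_nonneg (mul_pos (exp_pos _) (gaussM_pos v)).le]
  calc exp (a * ‖v‖) * gaussM v = (2 * π) ^ (-(N : ℝ) / 2) * exp (a * ‖v‖ + -‖v‖ ^ 2 / 2) := by
        rw [gaussM, exp_add]; ring
    _ ≤ (2 * π) ^ (-(N : ℝ) / 2) * exp (a ^ 2 + -(1 / 4) * ‖v‖ ^ 2) := by gcongr
    _ = _ := by rw [exp_add]; ring

end Gaussian

section FluxMeasure

variable {N : ℕ} (n : EuclideanSpace ℝ (Fin N))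

noncomputable def fluxDensity (v : EuclideanSpace ℝ (Fin N)) : ℝ≥0 :=
  (√(2 * π) * (max ⟪v, n⟫ 0 * gaussM v)).toNNReal

noncomputable def fluxMeasure : Measure (EuclideanSpace ℝ (Fin N)) :=
  volume.withDensity fun v => fluxDensity n v

theorem measurable_fluxDensity : Measurable (fluxDensity n) := by
  unfold fluxDensity
  exact (by fun_prop : Continuous _).measurable.real_toNNReal

theorem coe_fluxDensity (v : EuclideanSpace ℝ (Fin N)) :
    (fluxDensity n v : ℝ) = √(2 * π) * (max ⟪v, n⟫ 0 * gaussM v) :=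
  Real.coe_toNNReal _ (by have := gaussM_pos v; positivity)

theorem Lam_eq_integral_fluxMeasure (φ : EuclideanSpace ℝ (Fin N) → ℝ) :
    Lam n φ = ∫ v, φ v ∂fluxMeasure n := by
  rw [fluxMeasure, integral_withDensity_eq_integral_smul (measurable_fluxDensity n), Lam,
    ← integral_const_mul]
  congr 1 with v
  rw [NNReal.smul_def, coe_fluxDensity, smul_eq_mul]
  ring

theorem integral_mul_posPart_inner_mul_gaussM (φ : EuclideanSpace ℝ (Fin N) → ℝ) :
    ∫ v, φ v * max ⟪v, n⟫ 0 * gaussM v = (√(2 * π))⁻¹ * ∫ v, φ v ∂fluxMeasure n := by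
  rw [← Lam_eq_integral_fluxMeasure, Lam, inv_mul_cancel_left₀ (by positivity)]

theorem fluxMeasure_absolutelyContinuous : fluxMeasure n ≪ volume :=
  withDensity_absolutelyContinuous _ _

variable {n}

theorem integrable_fluxMeasure_iff {φ : EuclideanSpace ℝ (Fin N) → ℝ} :
    Integrable φ (fluxMeasure n) ↔ Integrable fun v => φ v * max ⟪v, n⟫ 0 * gaussM v := by
  rw [fluxMeasure, integrable_withDensity_iff_integrable_smul (measurable_fluxDensity n),
    ← integrable_const_mul_iff (isUnit_iff_ne_zero.2 (inv_ne_zero (sqrt_ne_zero'.2 two_pi_pos)))]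
  refine integrable_congr (Filter.Eventually.of_forall fun v => ?_)
  simp only [NNReal.smul_def, coe_fluxDensity, smul_eq_mul]
  field_simp

theorem isProbabilityMeasure_fluxMeasure (hn : ‖n‖ = 1) : IsProbabilityMeasure (fluxMeasure n) :=
  ⟨by simpa [Lam_eq_integral_fluxMeasure, measureReal_def, ENNReal.toReal_eq_one_iff] using
    Lam_one hn⟩

theorem integrable_exp_mul_norm_fluxMeasure (a : ℝ) :
    Integrable (fun v => exp (a * ‖v‖)) (fluxMeasure n) := by
  rw [integrable_fluxMeasure_iff]
  refine ((integrable_exp_mul_norm_mul_gaussM (a + 1)).const_mul ‖n‖).mono'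
    (by fun_prop) (Filter.Eventually.of_forall fun v => ?_)
  have hpos : max ⟪v, n⟫ 0 ≤ ‖n‖ * exp ‖v‖ :=
    max_le ((real_inner_le_norm v n).trans (by nlinarith [add_one_le_exp ‖v‖, norm_nonneg n]))
      (by positivity)
  have := gaussM_pos v
  rw [norm_of_nonneg (by positivity), add_mul, one_mul, exp_add]
  calc exp (a * ‖v‖) * max ⟪v, n⟫ 0 * gaussM v
      ≤ exp (a * ‖v‖) * (‖n‖ * exp ‖v‖) * gaussM v := by gcongr
    _ = _ := by ring

end FluxMeasure

theorem boundary_term_control_general {N : ℕ} (n u : EuclideanSpace ℝ (Fin N))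
    (hn : ‖n‖ = 1) (hu : ⟪u, n⟫ = 0)
    (ε : ℝ) (hε : 0 < ε) (hε1 : ε ≤ 1)
    (g : EuclideanSpace ℝ (Fin N) → ℝ)
    (hpos : ∀ᵐ v : EuclideanSpace ℝ (Fin N), 0 ≤ 1 + ε * g v)
    (hg_int : Integrable fun v => g v * max ⟪v, n⟫ 0 * gaussM v)
    (hhg_int : Integrable fun v => entH (ε * g v) * max ⟪v, n⟫ 0 * gaussM v)
    (hexp_int : Integrable fun v =>
      Real.exp (2 * ‖u‖ * ‖v‖) * (1 + ε * g v) * max ⟪v, n⟫ 0 * gaussM v) :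
    (∫ v, ⟪u, v⟫ * max ⟪v, n⟫ 0 * g v * gaussM v)
      ≤ (1 / (2 * ε ^ 2)) *
          ((1 / Real.sqrt (2 * π)) * (Lam n (fun v => entH (ε * g v)) - entH (ε * Lam n g)))
        + ((1 : ℝ) / 2 *
            ∫ v, (Real.exp (2 * ‖u‖ * ‖v‖) - 2 * ‖u‖ * ‖v‖ - 1) * max ⟪v, n⟫ 0 * gaussM v) *
          Lam n (fun v => 1 + ε * g v) := by
  have := isProbabilityMeasure_fluxMeasure hn
  have hg := integrable_fluxMeasure_iff.2 hg_int
  have key := integral_inner_mul_le_entH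
    (by rw [← Lam_eq_integral_fluxMeasure, Lam_inner_eq_zero hu])
    (integrable_exp_mul_norm_fluxMeasure _) hε hε1
    ((fluxMeasure_absolutelyContinuous n).ae_le hpos) hg
    (integrable_fluxMeasure_iff.2 hhg_int) (integrable_fluxMeasure_iff.2 hexp_int)
  have hmass : Lam n (fun v => 1 + ε * g v) = 1 + ε * ∫ v, g v ∂fluxMeasure n := by
    simp [Lam_eq_integral_fluxMeasure, integral_add (integrable_const 1) (hg.const_mul ε),
      integral_const_mul]
  have hL : ∫ v, ⟪u, v⟫ * max ⟪v, n⟫ 0 * g v * gaussM v =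
      (√(2 * π))⁻¹ * ∫ v, ⟪u, v⟫ * g v ∂fluxMeasure n := by
    rw [← integral_mul_posPart_inner_mul_gaussM]
    congr 1 with v
    ring
  rw [hmass, hL, integral_mul_posPart_inner_mul_gaussM, Lam_eq_integral_fluxMeasure,
    Lam_eq_integral_fluxMeasure]
  refine (mul_le_mul_of_nonneg_left key (inv_nonneg.2 (sqrt_nonneg (2 * π)))).trans_eq ?_
  ring

/-- Pointwise control of the boundary term by the Darrozes-Guiraud information:
for a unit vector `n`, a tangential vector `u`, `0 < ε ≤ 1` and `1 + εg ≥ 0`,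
`∫ (u·v)(v·n)₊ g M dv ≤ (1/(2ε²))·(1/√(2π))(Λ_n(h(εg)) − h(εΛ_n(g))) + C(u)·Λ_n(1+εg)`,
where `C(u) = ½ ∫ (e^{2|u||v|} − 2|u||v| − 1)(v·n)₊ M dv`. -/
theorem boundary_term_control {N : ℕ} (n u : EuclideanSpace ℝ (Fin N))
    (hn : ‖n‖ = 1) (hu : ⟪u, n⟫ = 0)
    (ε : ℝ) (hε : 0 < ε) (hε1 : ε ≤ 1)
    (g : EuclideanSpace ℝ (Fin N) → ℝ) (hgmeas : Measurable g)
    (hpos : ∀ᵐ v : EuclideanSpace ℝ (Fin N), 0 ≤ 1 + ε * g v)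
    (hg_int : Integrable fun v => g v * max ⟪v, n⟫ 0 * gaussM v)
    (hhg_int : Integrable fun v => entH (ε * g v) * max ⟪v, n⟫ 0 * gaussM v)
    (hexp_int : Integrable fun v =>
      Real.exp (2 * ‖u‖ * ‖v‖) * (1 + ε * g v) * max ⟪v, n⟫ 0 * gaussM v) :
    (∫ v, ⟪u, v⟫ * max ⟪v, n⟫ 0 * g v * gaussM v)
      ≤ (1 / (2 * ε ^ 2)) *
          ((1 / Real.sqrt (2 * π)) * (Lam n (fun v => entH (ε * g v)) - entH (ε * Lam n g)))
        + ((1 : ℝ) / 2 *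
            ∫ v, (Real.exp (2 * ‖u‖ * ‖v‖) - 2 * ‖u‖ * ‖v‖ - 1) * max ⟪v, n⟫ 0 * gaussM v) *
          Lam n (fun v => 1 + ε * g v) :=
  boundary_term_control_general n u hn hu ε hε hε1 g hpos hg_int hhg_int hexp_int
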